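/- arXiv:2002.05053 — 2 statements merged into one kernel-verified Lean document; each statement's English description precedes it below -/
import Mathlib

section
/- Let N ∈ ℕ, θ = N + 1/2, ω ∈ ℝ, and let v⁺ ∈ H_N with Fourier coefficients v⁺_k (k ∈ ℤ³, |k|² ≤ N). Define W(t) = Σ_{|k|²≤N} e^{(θ − |k|² − iω|k|²)t} · v⁺_k · e_k for t ≤ 0. Then W solves ∂_t W − (1+iω)ΔW − θW = 0 on (−∞,0) × 𝕋³ with P_N W(0) = v⁺, W belongs to L²(ℝ₋, H), and ‖W‖_{L²(ℝ₋,H)} ≤ ‖v⁺‖_H. -/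
open MeasureTheory Real Complex
open scoped ComplexConjugate ENNReal

noncomputable section

/-- The lattice ℤ³ of Fourier modes. -/
abbrev Z3 := Fin 3 → ℤ

/-- Physical space ℝ³; 2π-periodic functions on it represent functions on the torus 𝕋³. -/
abbrev R3 := Fin 3 → ℝ

/-- |k|² = Σⱼ kⱼ², the eigenvalue of −Δ on the torus corresponding to `e_k`. -/
def ksq (k : Z3) : ℤ := ∑ j, (k j) ^ 2

/-- A fundamental domain (−π,π]³ of the torus 𝕋³ = (ℝ/2πℤ)³. -/
def Q3 : Set R3 := Set.univ.pi fun _ => Set.Ioc (-π) π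

/-- The measure on the torus: Lebesgue measure on the fundamental domain. -/
def μT : Measure R3 := volume.restrict Q3

/-- The orthonormal Fourier basis `e_k(x) = (2π)^{−3/2} e^{i k·x}` of `H = L²(𝕋³;ℂ)`. -/
def ek (k : Z3) (x : R3) : ℂ :=
  (((2 * π) ^ (-(3 : ℝ) / 2) : ℝ) : ℂ) *
    Complex.exp (Complex.I * ∑ j, (k j : ℂ) * (x j : ℂ))

/-- The k-th Fourier coefficient of a function on the torus: `⟨e_k, f⟩_{L²}`. -/
def coefFn (k : Z3) (f : R3 → ℂ) : ℂ := ∫ x, conj (ek k x) * f x ∂μT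

/-!
Since `v⁺` is supported on the finitely many modes with `|k|² ≤ N`, each `W(t)` is a finite Fourier
sum with coefficients `e^{λ_k t} v⁺_k`, where `λ_k = θ − (1 + iω)|k|²`. Orthonormality of the `e_k`
on the torus reads off these coefficients, which solve `c' = λ_k c`, and gives Parseval's identity
`‖W(t)‖² = Σ_k |e^{λ_k t}|² |v⁺_k|²`. As `|k|²` is an integer `≤ N`, `Re λ_k = θ − |k|² ≥ 1/2`, so
`|e^{λ_k t}|² ≤ e^t` for `t ≤ 0`, and `‖W‖²_{L²(ℝ₋,H)} ≤ ‖v⁺‖² ∫_{−∞}^0 e^t dt = ‖v⁺‖²`.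
-/

section Orthonormal

variable {α ι : Type*} [MeasurableSpace α] {μ : Measure α} {e : ι → α → ℂ}

lemma integrable_conj_mul_sum (hint : ∀ k l, Integrable (fun x => conj (e k x) * e l x) μ)
    (S : Finset ι) (c : ι → ℂ) (k : ι) :
    Integrable (fun x => conj (e k x) * ∑ l ∈ S, c l * e l x) μ := by
  simp_rw [Finset.mul_sum, mul_left_comm (conj (e k _))]
  exact integrable_finsetSum S fun l _ => (hint k l).const_mul (c l)

lemma integral_conj_mul_sum_of_orthonormal [DecidableEq ι]
    (hint : ∀ k l, Integrable (fun x => conj (e k x) * e l x) μ)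
    (horth : ∀ k l, ∫ x, conj (e k x) * e l x ∂μ = if k = l then 1 else 0)
    (S : Finset ι) (c : ι → ℂ) (k : ι) :
    ∫ x, conj (e k x) * ∑ l ∈ S, c l * e l x ∂μ = if k ∈ S then c k else 0 := by
  simp_rw [Finset.mul_sum, mul_left_comm (conj (e k _))]
  rw [integral_finsetSum S fun l _ => (hint k l).const_mul (c l)]
  simp_rw [integral_const_mul, horth, mul_ite, mul_one, mul_zero]
  exact Finset.sum_ite_eq S k c

lemma integral_norm_sq_sum_of_orthonormal [DecidableEq ι]
    (hint : ∀ k l, Integrable (fun x => conj (e k x) * e l x) μ)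
    (horth : ∀ k l, ∫ x, conj (e k x) * e l x ∂μ = if k = l then 1 else 0)
    (S : Finset ι) (c : ι → ℂ) :
    ∫ x, ‖∑ l ∈ S, c l * e l x‖ ^ 2 ∂μ = ∑ l ∈ S, ‖c l‖ ^ 2 := by
  have hconj : ∀ x, conj (∑ l ∈ S, c l * e l x) * ∑ l ∈ S, c l * e l x
      = ∑ l ∈ S, conj (c l) * (conj (e l x) * ∑ m ∈ S, c m * e m x) := by
    intro x
    simp only [map_sum, map_mul, Finset.sum_mul, mul_assoc]
  apply Complex.ofReal_injective
  rw [← integral_complex_ofReal]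
  push_cast
  simp_rw [← Complex.conj_mul', hconj]
  rw [integral_finsetSum S fun l _ => (integrable_conj_mul_sum hint S c l).const_mul _]
  simp_rw [integral_const_mul, integral_conj_mul_sum_of_orthonormal hint horth]
  exact Finset.sum_congr rfl fun l hl => by rw [if_pos hl]

lemma lintegral_enorm_sq_sum_of_orthonormal [DecidableEq ι]
    (hint : ∀ k l, Integrable (fun x => conj (e k x) * e l x) μ)
    (horth : ∀ k l, ∫ x, conj (e k x) * e l x ∂μ = if k = l then 1 else 0)
    (S : Finset ι) (c : ι → ℂ) :
    ∫⁻ x, (‖∑ l ∈ S, c l * e l x‖₊ : ℝ≥0∞) ^ 2 ∂μ = ENNReal.ofReal (∑ l ∈ S, ‖c l‖ ^ 2) := by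
  have hint_sq : Integrable (fun x => ‖∑ l ∈ S, c l * e l x‖ ^ 2) μ := by
    refine (integrable_finsetSum S fun l _ =>
      (integrable_conj_mul_sum hint S c l).const_mul (conj (c l))).norm.congr
        (ae_of_all _ fun x => ?_)
    simp only [← mul_assoc, ← map_mul, ← Finset.sum_mul, ← map_sum, Complex.conj_mul']
    simp
  rw [← integral_norm_sq_sum_of_orthonormal hint horth,
    ofReal_integral_eq_lintegral_ofReal hint_sq (ae_of_all _ fun _ => sq_nonneg _)]
  refine lintegral_congr fun x => ?_
  rw [ENNReal.ofReal_pow (norm_nonneg _), ofReal_norm, enorm_eq_nnnorm]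

end Orthonormal

lemma integral_Ioc_exp_int_mul_I (m : ℤ) :
    ∫ y in Set.Ioc (-π) π, exp (m * I * y) = if m = 0 then (2 * π : ℂ) else 0 := by
  rw [← intervalIntegral.integral_of_le (by linarith [pi_pos])]
  split_ifs with hm
  · simp only [hm, Int.cast_zero, zero_mul, Complex.exp_zero, intervalIntegral.integral_const,
      sub_neg_eq_add, real_smul, ofReal_add, mul_one]
    ring
  · have hmI : (m * I : ℂ) ≠ 0 := by simp [hm]
    rw [integral_exp_mul_complex hmI, div_eq_zero_iff, sub_eq_zero]
    left
    rw [show (m * I * (π : ℝ) : ℂ) = m * I * (-π : ℝ) + m * (2 * π * I) by push_cast; ring,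
      Complex.exp_add, exp_int_mul_two_pi_mul_I, mul_one]

lemma μT_eq_pi : μT = Measure.pi fun _ => volume.restrict (Set.Ioc (-π) π) := by
  rw [μT, Q3, volume_pi, Measure.restrict_pi_pi]

instance : IsFiniteMeasure μT := by
  rw [μT_eq_pi]
  infer_instance

lemma conj_ek_mul_ek (k l : Z3) (x : R3) :
    conj (ek k x) * ek l x = ∏ j, ((2 * π)⁻¹ : ℂ) * exp ((l j - k j : ℤ) * I * x j) := by
  have hsq : ((2 * π) ^ (-(3 : ℝ) / 2) : ℝ) * (2 * π) ^ (-(3 : ℝ) / 2) = ((2 * π)⁻¹) ^ 3 := by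
    rw [← Real.rpow_add (by positivity), ← Real.rpow_natCast, Real.inv_rpow (by positivity),
      ← Real.rpow_neg (by positivity)]
    norm_num
  have hexp : conj (exp (I * ∑ j, (k j : ℂ) * x j)) * exp (I * ∑ j, (l j : ℂ) * x j)
      = ∏ j, exp ((l j - k j : ℤ) * I * x j) := by
    rw [← Complex.exp_conj, ← Complex.exp_add, ← Complex.exp_sum]
    congr 1
    simp only [map_mul, Complex.conj_I, map_sum, map_intCast, Complex.conj_ofReal, Finset.mul_sum,
      ← Finset.sum_add_distrib]
    push_cast
    exact Finset.sum_congr rfl fun j _ => by ring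
  rw [ek, ek, map_mul, Complex.conj_ofReal, mul_mul_mul_comm, ← Complex.ofReal_mul, hsq, hexp,
    Finset.prod_mul_distrib, Finset.prod_const, Finset.card_univ, Fintype.card_fin]
  push_cast
  rfl

lemma integral_conj_ek_mul_ek (k l : Z3) :
    ∫ x, conj (ek k x) * ek l x ∂μT = if k = l then 1 else 0 := by
  simp_rw [conj_ek_mul_ek, μT_eq_pi]
  rw [integral_fintype_prod_eq_prod
    (fun j (y : ℝ) => ((2 * π)⁻¹ : ℂ) * exp ((l j - k j : ℤ) * I * y))]
  have hπ : (2 * π : ℂ) ≠ 0 := by exact_mod_cast (by positivity : (2 * π : ℝ) ≠ 0)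
  simp_rw [integral_const_mul, integral_Ioc_exp_int_mul_I, mul_ite, inv_mul_cancel₀ hπ, mul_zero,
    Fintype.prod_boole, sub_eq_zero, funext_iff, eq_comm]

lemma norm_ek (k : Z3) (x : R3) : ‖ek k x‖ = (2 * π) ^ (-(3 : ℝ) / 2) := by
  have hre : (I * ∑ j, (k j : ℂ) * x j).re = 0 := by
    simp [Complex.mul_re, Complex.im_sum]
  rw [ek, norm_mul, Complex.norm_exp, hre, Real.exp_zero, mul_one, Complex.norm_real,
    Real.norm_of_nonneg (by positivity)]

lemma integrable_conj_ek_mul_ek (k l : Z3) : Integrable (fun x => conj (ek k x) * ek l x) μT :=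
  Integrable.of_bound (by unfold ek; fun_prop)
    ((2 * π) ^ (-(3 : ℝ) / 2) * (2 * π) ^ (-(3 : ℝ) / 2))
    (ae_of_all _ fun x => by rw [norm_mul, RCLike.norm_conj, norm_ek, norm_ek])

lemma coefFn_sum_ek (S : Finset Z3) (c : Z3 → ℂ) (k : Z3) :
    coefFn k (fun x => ∑ l ∈ S, c l * ek l x) = if k ∈ S then c k else 0 :=
  integral_conj_mul_sum_of_orthonormal integrable_conj_ek_mul_ek integral_conj_ek_mul_ek S c k

lemma lintegral_enorm_sq_sum_ek (S : Finset Z3) (c : Z3 → ℂ) :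
    ∫⁻ x, (‖∑ l ∈ S, c l * ek l x‖₊ : ℝ≥0∞) ^ 2 ∂μT = ENNReal.ofReal (∑ l ∈ S, ‖c l‖ ^ 2) :=
  lintegral_enorm_sq_sum_of_orthonormal integrable_conj_ek_mul_ek integral_conj_ek_mul_ek S c

lemma sq_le_ksq (k : Z3) (j : Fin 3) : k j ^ 2 ≤ ksq k :=
  Finset.single_le_sum (f := fun j => k j ^ 2) (fun i _ => sq_nonneg (k i)) (Finset.mem_univ j)

def lowModes (N : ℕ) : Finset Z3 :=
  {k ∈ Finset.Icc (fun _ => -(N : ℤ)) (fun _ => (N : ℤ)) | ksq k ≤ N}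

lemma mem_lowModes {N : ℕ} {k : Z3} : k ∈ lowModes N ↔ (ksq k : ℝ) ≤ N := by
  rw [lowModes, Finset.mem_filter, Finset.mem_Icc]
  norm_cast
  refine ⟨And.right, fun hk => ⟨⟨fun j => ?_, fun j => ?_⟩, hk⟩⟩
  · have := Int.le_self_sq (-k j)
    rw [neg_sq] at this
    linarith [sq_le_ksq k j]
  · linarith [Int.le_self_sq (k j), sq_le_ksq k j]

lemma tsum_ite_ksq_le_eq_sum_lowModes {M : Type*} [AddCommMonoid M] [TopologicalSpace M]
    (N : ℕ) (f : Z3 → M) :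
    (∑' k : Z3, if (ksq k : ℝ) ≤ N then f k else 0) = ∑ k ∈ lowModes N, f k := by
  rw [tsum_eq_sum fun k hk => if_neg (mt mem_lowModes.2 hk)]
  exact Finset.sum_congr rfl fun k hk => if_pos (mem_lowModes.1 hk)

lemma norm_cexp_mul_sq_le_exp {z : ℂ} (hz : 1 / 2 ≤ z.re) {t : ℝ} (ht : t ≤ 0) :
    ‖exp (z * t)‖ ^ 2 ≤ Real.exp t := by
  rw [Complex.norm_exp, Complex.re_mul_ofReal, ← Real.exp_nat_mul, Real.exp_le_exp]
  push_cast
  nlinarith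

lemma hasDerivAt_cexp_mul_ofReal_mul_const (z c : ℂ) (t : ℝ) :
    HasDerivAt (fun s : ℝ => exp (z * s) * c) (z * (exp (z * t) * c)) t := by
  have h := ((hasDerivAt_id t).ofReal_comp.const_mul z).cexp.mul_const c
  simp only [id, Complex.ofReal_one, mul_one] at h
  exact h.congr_deriv (by ring)

lemma lintegral_Iic_ofReal_exp : ∫⁻ t in Set.Iic (0 : ℝ), ENNReal.ofReal (Real.exp t) = 1 := by
  rw [← ofReal_integral_eq_lintegral_ofReal (integrableOn_exp_Iic 0)
    (ae_of_all _ fun t => (Real.exp_pos t).le), integral_exp_Iic_zero, ENNReal.ofReal_one]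

lemma lintegral_Iic_lintegral_enorm_sq_sum_ek_le {S : Finset Z3} {z : Z3 → ℂ}
    (hz : ∀ k ∈ S, 1 / 2 ≤ (z k).re) (v : Z3 → ℂ) :
    ∫⁻ t in Set.Iic (0 : ℝ), ∫⁻ x, (‖∑ k ∈ S, (exp (z k * t) * v k) * ek k x‖₊ : ℝ≥0∞) ^ 2 ∂μT
      ≤ ENNReal.ofReal (∑ k ∈ S, ‖v k‖ ^ 2) := by
  have hmode : ∀ t : ℝ, t ≤ 0 → ∫⁻ x, (‖∑ k ∈ S, (exp (z k * t) * v k) * ek k x‖₊ : ℝ≥0∞) ^ 2 ∂μT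
      ≤ ENNReal.ofReal (Real.exp t) * ENNReal.ofReal (∑ k ∈ S, ‖v k‖ ^ 2) := by
    intro t ht
    rw [lintegral_enorm_sq_sum_ek, ← ENNReal.ofReal_mul (Real.exp_pos t).le, Finset.mul_sum]
    refine ENNReal.ofReal_le_ofReal (Finset.sum_le_sum fun k hk => ?_)
    rw [norm_mul, mul_pow]
    exact mul_le_mul_of_nonneg_right (norm_cexp_mul_sq_le_exp (hz k hk) ht) (sq_nonneg _)
  calc _ ≤ ∫⁻ t in Set.Iic (0 : ℝ),
          ENNReal.ofReal (Real.exp t) * ENNReal.ofReal (∑ k ∈ S, ‖v k‖ ^ 2) :=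
        setLIntegral_mono' measurableSet_Iic hmode
    _ = ENNReal.ofReal (∑ k ∈ S, ‖v k‖ ^ 2) := by
        rw [lintegral_mul_const _ (by fun_prop), lintegral_Iic_ofReal_exp, one_mul]

/-- For `v⁺ ∈ H_N` (given by its Fourier coefficients, supported on
`|k|² ≤ N`), the function `W(t) = Σ_{|k|²≤N} e^{(θ−|k|²−iω|k|²)t} v⁺_k e_k`, θ = N + 1/2,
solves (mode-by-mode, equivalently) `∂ₜW − (1+iω)ΔW − θW = 0` on (−∞,0)×𝕋³ with
`P_N W(0) = v⁺`, belongs to `L²(ℝ₋,H)` and satisfies `‖W‖_{L²(ℝ₋,H)} ≤ ‖v⁺‖_H`. -/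
theorem stmt3 (N : ℕ) (θ : ℝ) (hθ : θ = (N : ℝ) + 1/2) (ω : ℝ) (vplus : Z3 → ℂ)
    (hsupp : ∀ k : Z3, ¬((ksq k : ℝ) ≤ (N : ℝ)) → vplus k = 0)
    (W : ℝ → R3 → ℂ)
    (hW : W = fun (t : ℝ) (x : R3) =>
      ∑' k : Z3, if (ksq k : ℝ) ≤ (N : ℝ) then
        Complex.exp (((θ : ℂ) - (ksq k : ℂ) - (ω : ℂ) * (ksq k : ℂ) * Complex.I) * (t : ℂ)) *
          vplus k * ek k x
      else 0) :
    -- the equation ∂ₜW − (1+iω)ΔW − θW = 0, mode by mode (Δe_k = −|k|² e_k):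
    (∀ k : Z3, ∀ t < (0 : ℝ),
      HasDerivAt (fun s : ℝ => coefFn k (W s))
        (((θ : ℂ) - (1 + (ω : ℂ) * Complex.I) * (ksq k : ℂ)) * coefFn k (W t)) t) ∧
    -- the initial condition P_N W(0) = v⁺:
    (∀ k : Z3, (ksq k : ℝ) ≤ (N : ℝ) → coefFn k (W 0) = vplus k) ∧
    -- W ∈ L²(ℝ₋,H) with ‖W‖_{L²(ℝ₋,H)} ≤ ‖v⁺‖_H (squared form):
    (∫⁻ t in Set.Iic (0 : ℝ), ∫⁻ x, (‖W t x‖₊ : ℝ≥0∞) ^ 2 ∂μT)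
      ≤ ENNReal.ofReal (∑' k : Z3, ‖vplus k‖ ^ 2) := by
  set rate : Z3 → ℂ := fun k => θ - (1 + ω * I) * ksq k
  have hW_sum : ∀ t, W t = fun x => ∑ k ∈ lowModes N, (exp (rate k * t) * vplus k) * ek k x := by
    intro t
    ext x
    simp only [hW, tsum_ite_ksq_le_eq_sum_lowModes, rate]
    exact Finset.sum_congr rfl fun k _ => by ring_nf
  have hcoef : ∀ t k, coefFn k (W t) = if k ∈ lowModes N then exp (rate k * t) * vplus k else 0 :=
    fun t k => by rw [hW_sum, coefFn_sum_ek]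
  refine ⟨fun k t _ => ?_, fun k hk => ?_, ?_⟩
  · simp_rw [hcoef]
    split_ifs
    · exact hasDerivAt_cexp_mul_ofReal_mul_const (rate k) (vplus k) t
    · simpa using hasDerivAt_const t (0 : ℂ)
  · rw [hcoef, if_pos (mem_lowModes.2 hk)]
    simp
  · have hgap : ∀ k ∈ lowModes N, 1 / 2 ≤ (rate k).re := fun k hk => by
      have hre : (rate k).re = θ - ksq k := by simp [rate]
      rw [hre, hθ]
      linarith [mem_lowModes.1 hk]
    have hvplus : ∑' k : Z3, ‖vplus k‖ ^ 2 = ∑ k ∈ lowModes N, ‖vplus k‖ ^ 2 := by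
      rw [← tsum_ite_ksq_le_eq_sum_lowModes]
      exact tsum_congr fun k => by split_ifs with hk <;> simp [hsupp k, hk]
    simp only [hW_sum, hvplus]
    exact lintegral_Iic_lintegral_enorm_sq_sum_ek_le hgap vplus
end
end

section
/- Let ω ≠ 0 and μ be real numbers, let I ⊂ ℝ be an open interval, let β: I → ℂ be differentiable, and let Z, g: I → ℂ with Z differentiable satisfy Z'(t) + μ·Z(t) + e^{2iωt}β(t)·conj(Z(t)) = g(t) on I. Then the function U(t) := Z(t) − (i/(2ω))·e^{2iωt}·β(t)·conj(Z(t)) is differentiable on I and satisfies the identity U'(t) + μ·Z(t) = g(t) − (i/(2ω))·e^{2iωt}·(β'(t) − μβ(t))·conj(Z(t)) + (i/(2ω))·|β(t)|²·Z(t) − (i/(2ω))·e^{2iωt}·β(t)·conj(g(t)) for all t ∈ I. -/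
/-! With `E t = e^{2iωt}` one has `(i/(2ω)) E' = -E`, so differentiating the correction term
`(i/(2ω)) E β conj Z` produces exactly `-E β conj Z`, cancelling the forcing term of `Z'`. The
remaining `conj Z'` is substituted from the equation once more, and `|E| = 1` turns
`E β conj (E β conj Z)` into `|β|² Z`. -/

open Complex
open scoped ComplexConjugate

theorem hasDerivAt_cexp_const_mul_ofReal (c : ℂ) (t : ℝ) :
    HasDerivAt (fun s : ℝ => cexp (c * s)) (c * cexp (c * t)) t := by
  simpa [mul_comm] using (((hasDerivAt_id t).ofReal_comp).const_mul c).cexp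

theorem norm_cexp_ofReal_mul_I_mul_ofReal (a t : ℝ) : ‖cexp (a * I * t)‖ = 1 := by
  rw [show (a : ℂ) * I * t = ((a * t : ℝ) : ℂ) * I by push_cast; ring]
  exact norm_exp_ofReal_mul_I _

theorem hasDerivAt_sub_mul_mul_conj {k c : ℂ} (hkc : k * c = -1) (μ : ℝ)
    {E β Z : ℝ → ℂ} {βd g : ℂ} {t : ℝ} (hE : HasDerivAt E (c * E t) t) (hEt : ‖E t‖ = 1)
    (hβ : HasDerivAt β βd t)
    (hZ : HasDerivAt Z (g - μ * Z t - E t * β t * conj (Z t)) t) :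
    HasDerivAt (fun s => Z s - k * E s * β s * conj (Z s))
      (g - μ * Z t - k * E t * (βd - μ * β t) * conj (Z t)
        + k * ((‖β t‖ ^ 2 : ℝ) : ℂ) * Z t - k * E t * β t * conj g) t := by
  refine (hZ.sub (((hE.const_mul k).mul hβ).mul hZ.star)).congr_deriv ?_
  have hEE : E t * conj (E t) = 1 := by rw [mul_conj', hEt]; norm_num
  have hββ : ((‖β t‖ ^ 2 : ℝ) : ℂ) = β t * conj (β t) := by push_cast; exact (mul_conj' _).symm
  simp only [Pi.mul_apply, star_sub, star_mul', Complex.star_def, conj_conj, conj_ofReal]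
  linear_combination
    -(E t * β t * conj (Z t)) * hkc + k * β t * conj (β t) * Z t * hEE - k * Z t * hββ

theorem stmt10_general (ω μ : ℝ) (hω : ω ≠ 0) (I : Set ℝ)
    (β βd Z g : ℝ → ℂ)
    (hβ : ∀ t ∈ I, HasDerivAt β (βd t) t)
    (hZ : ∀ t ∈ I, HasDerivAt Z
      (g t - (μ : ℂ) * Z t -
        Complex.exp (2 * (ω : ℂ) * Complex.I * (t : ℂ)) * β t * conj (Z t)) t) :
    ∀ t ∈ I,
      HasDerivAt (fun s : ℝ => Z s -
          Complex.I / (2 * (ω : ℂ)) * Complex.exp (2 * (ω : ℂ) * Complex.I * (s : ℂ)) *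
            β s * conj (Z s))
        (g t - (μ : ℂ) * Z t
          - Complex.I / (2 * (ω : ℂ)) * Complex.exp (2 * (ω : ℂ) * Complex.I * (t : ℂ)) *
              (βd t - (μ : ℂ) * β t) * conj (Z t)
          + Complex.I / (2 * (ω : ℂ)) * ((‖β t‖ ^ 2 : ℝ) : ℂ) * Z t
          - Complex.I / (2 * (ω : ℂ)) * Complex.exp (2 * (ω : ℂ) * Complex.I * (t : ℂ)) *
              β t * conj (g t)) t := by
  intro t ht
  have hkc : Complex.I / (2 * ω) * (2 * ω * Complex.I) = -1 := by
    field_simp [ofReal_ne_zero.mpr hω]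
    rw [I_sq]
  have hEt : ‖cexp (2 * ω * Complex.I * t)‖ = 1 := by
    exact_mod_cast norm_cexp_ofReal_mul_I_mul_ofReal (2 * ω) t
  exact hasDerivAt_sub_mul_mul_conj hkc μ (hasDerivAt_cexp_const_mul_ofReal _ t) hEt
    (hβ t ht) (hZ t ht)

/-- **temporal averaging identity.** If `Z' + μZ + e^{2iωt}β(t)·conj Z = g`
on an open interval `I`, then `U(t) = Z(t) − (i/(2ω)) e^{2iωt} β(t) conj(Z(t))` satisfies
`U' + μZ = g − (i/(2ω)) e^{2iωt}(β' − μβ)·conj Z + (i/(2ω))|β|² Z − (i/(2ω)) e^{2iωt} β·conj g`. -/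
theorem stmt10 (ω μ : ℝ) (hω : ω ≠ 0) (I : Set ℝ) (hIopen : IsOpen I)
    (hIconn : I.OrdConnected)
    (β βd Z g : ℝ → ℂ)
    (hβ : ∀ t ∈ I, HasDerivAt β (βd t) t)
    (hZ : ∀ t ∈ I, HasDerivAt Z
      (g t - (μ : ℂ) * Z t -
        Complex.exp (2 * (ω : ℂ) * Complex.I * (t : ℂ)) * β t * conj (Z t)) t) :
    ∀ t ∈ I,
      HasDerivAt (fun s : ℝ => Z s -
          Complex.I / (2 * (ω : ℂ)) * Complex.exp (2 * (ω : ℂ) * Complex.I * (s : ℂ)) *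
            β s * conj (Z s))
        (g t - (μ : ℂ) * Z t
          - Complex.I / (2 * (ω : ℂ)) * Complex.exp (2 * (ω : ℂ) * Complex.I * (t : ℂ)) *
              (βd t - (μ : ℂ) * β t) * conj (Z t)
          + Complex.I / (2 * (ω : ℂ)) * ((‖β t‖ ^ 2 : ℝ) : ℂ) * Z t
          - Complex.I / (2 * (ω : ℂ)) * Complex.exp (2 * (ω : ℂ) * Complex.I * (t : ℂ)) *
              β t * conj (g t)) t :=
  stmt10_general ω μ hω I β βd Z g hβ hZ
end
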